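/- arXiv:1110.4647 — 3 statements merged into one kernel-verified Lean document; each statement's English description precedes it below -/
import Mathlib

section
/- Let R be a commutative Noetherian ring of prime characteristic p whose reduction R_red = R/𝔫 (𝔫 the nilradical of R) is F-finite, and let M be an R-module. Then M_{*R} = (0 :_M 𝔫)_{*R_red}, where (0 :_M 𝔫) = {x ∈ M : 𝔫·x = 0} is regarded as an R_red-module and its tight interior over R_red is viewed as a submodule of M. -/
open scoped TensorProduct Pointwise

universe u v w

/-- `R°`: the set of elements of `R` not contained in any minimal prime. -/
def RCirc (R : Type u) [CommRing R] : Set R :=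
  {c | ∀ P ∈ minimalPrimes R, c ∉ P}

/-- An additive map `g : M →+ N` between `R`-modules is `e`-th Frobenius semilinear if
`g (r ^ (p ^ e) • x) = r • g x`; these are exactly the `R`-linear maps `{}^e M → N`. -/
def IsFrobSemilinear (p e : ℕ) (R : Type u) [CommRing R] {M : Type v} {N : Type w}
    [AddCommGroup M] [Module R M] [AddCommGroup N] [Module R N] (g : M →+ N) : Prop :=
  ∀ (r : R) (x : M), g ((r ^ p ^ e) • x) = r • g x

/-- `M_*[c, p^{e₀}]`: the submodule generated by all `g ({}^e c)` for `e ≥ e₀` and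
`g ∈ Hom_R({}^e R, M)`. -/
def tiAux (p : ℕ) (R : Type u) [CommRing R] (M : Type v) [AddCommGroup M] [Module R M]
    (c : R) (e₀ : ℕ) : Submodule R M :=
  Submodule.span R {x : M | ∃ e : ℕ, e₀ ≤ e ∧ ∃ g : R →+ M, IsFrobSemilinear p e R g ∧ x = g c}

/-- The tight interior `M_{*R}`. -/
def tightInterior (p : ℕ) (R : Type u) [CommRing R] (M : Type v) [AddCommGroup M]
    [Module R M] : Submodule R M :=
  ⨅ c ∈ RCirc R, ⨅ e₀ : ℕ, tiAux p R M c e₀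

/-- `R` is `F`-finite: `{}^1 R` is a finitely generated `R`-module. -/
def FFinite (p : ℕ) (R : Type u) [CommRing R] : Prop :=
  ∃ s : Finset R, ∀ x : R, ∃ c : R → R, x = ∑ y ∈ s, c y ^ p * y

/-- `c` is a co-test element: `c ∈ R°` and `M_* = M_*[c, 1]` for every `R`-module `M`. -/
def IsCoTestElement (p : ℕ) (R : Type u) [CommRing R] (c : R) : Prop :=
  c ∈ RCirc R ∧
    ∀ (M : Type v) [AddCommGroup M] [Module R M], tightInterior p R M = tiAux p R M c 0

/-- Strong `F`-regularity: for every `c ∈ R°` some `R`-linear `φ : {}^e R → R` sends `{}^e c`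
to `1`. -/
def StronglyFRegular (p : ℕ) (R : Type u) [CommRing R] : Prop :=
  ∀ c ∈ RCirc R, ∃ (e : ℕ) (g : R →+ R), IsFrobSemilinear p e R g ∧ g c = 1

/-- `R` is `F`-coregular if `M_* = M` for every `R`-module `M`. -/
def FCoregular (p : ℕ) (R : Type u) [CommRing R] : Prop :=
  ∀ (M : Type v) [AddCommGroup M] [Module R M], tightInterior p R M = ⊤

/-- `{}^e R`: the ring `R` viewed as an `R`-module via the `e`-th iterate of Frobenius. -/
def FrobAlg (_p _e : ℕ) (R : Type u) : Type u := R

instance (p e : ℕ) (R : Type u) [CommRing R] : AddCommGroup (FrobAlg p e R) :=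
  inferInstanceAs (AddCommGroup R)

noncomputable instance (p e : ℕ) (R : Type u) [CommRing R] [ExpChar R p] :
    Module R (FrobAlg p e R) :=
  Module.compHom R (iterateFrobenius R p e)

/-- The tight closure of zero in `N`: those `z` such that for some `c ∈ R°`,
`{}^e c ⊗ z = 0` in `{}^e R ⊗_R N` for all `e ≥ 0`. -/
def zeroTC (p : ℕ) (R : Type u) [CommRing R] [Fact p.Prime] [CharP R p]
    (N : Type v) [AddCommGroup N] [Module R N] : Set N :=
  {z | ∃ c ∈ RCirc R, ∀ e : ℕ,
    ((show FrobAlg p e R from c) ⊗ₜ[R] z : TensorProduct R (FrobAlg p e R) N) = 0}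

/-- The big test ideal `τ_b(R) = ⋂_N Ann_R (0*_N)`. -/
def bigTestIdeal (p : ℕ) (R : Type u) [CommRing R] [Fact p.Prime] [CharP R p] : Set R :=
  {r | ∀ (N : Type v) [AddCommGroup N] [Module R N], ∀ z ∈ zeroTC p R N, r • z = 0}

/-!
Let `𝔫` be the nilradical and `N = (0 :_M 𝔫)`. Since `R` is Noetherian, `𝔫` is nilpotent, so a
large Frobenius power `x ↦ x ^ p ^ k` kills `𝔫` and factors through a ring map `R_red → R`.
Hence every `p^(e+k)`-linear map `g : R → M` lands in `N`, and precomposed with `R_red → R` it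
becomes a `p^e`-linear map `R_red → N` sending `c̄` to `g (c ^ p ^ k)`; this gives
`M_*[c ^ p ^ k, p^(e₀+k)] ⊆ N_*[c̄, p^e₀]`. Conversely a `p^e`-linear map `R_red → N`, composed
with `R → R_red` and `N ⊆ M`, is `p^e`-linear over `R`, so `N_*[c̄, p^e₀] ⊆ M_*[c, p^e₀]`. As
`c ↦ c̄` matches `R°` with `R_red°` and `c ^ p ^ k ∈ R°`, the two tight interiors agree.
-/

section RCirc

variable {R : Type*} [CommRing R]

lemma one_mem_RCirc : (1 : R) ∈ RCirc R :=
  fun _ hP h ↦ hP.1.1.ne_top ((Ideal.eq_top_iff_one _).mpr h)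

lemma pow_mem_RCirc {c : R} (hc : c ∈ RCirc R) (n : ℕ) : c ^ n ∈ RCirc R :=
  fun P hP h ↦ hc P hP (hP.1.1.mem_of_pow_mem n h)

lemma Ideal.minimalPrimes_eq_minimalPrimes_of_le_nilradical {I : Ideal R}
    (hI : I ≤ nilradical R) : I.minimalPrimes = minimalPrimes R := by
  have hrad : I.radical = (⊥ : Ideal R).radical :=
    le_antisymm (Ideal.radical_le_radical_iff.mpr hI) (Ideal.radical_mono bot_le)
  rw [← Ideal.radical_minimalPrimes, hrad, Ideal.radical_minimalPrimes, minimalPrimes]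

lemma mk_mem_RCirc_quotient_iff {I : Ideal R} (hI : I ≤ nilradical R) {c : R} :
    Ideal.Quotient.mk I c ∈ RCirc (R ⧸ I) ↔ c ∈ RCirc R := by
  show (∀ P ∈ minimalPrimes (R ⧸ I), _ ∉ P) ↔ ∀ P ∈ minimalPrimes R, c ∉ P
  rw [← Ideal.minimalPrimes_eq_minimalPrimes_of_le_nilradical hI, Ideal.minimalPrimes_eq_comap]
  simp only [Set.forall_mem_image, Ideal.mem_comap]

end RCirc

section Frobenius

variable {p : ℕ} {R : Type*} [CommRing R] {M : Type*} [AddCommGroup M] [Module R M] {I : Ideal R}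

lemma IsFrobSemilinear.map_mem_torsionBySet {s : Set R} {e : ℕ}
    (hs : ∀ n ∈ s, n ^ p ^ e = 0) {g : R →+ M} (hg : IsFrobSemilinear p e R g) (x : R) :
    g x ∈ Submodule.torsionBySet R M s := by
  rw [Submodule.mem_torsionBySet_iff]
  rintro ⟨n, hn⟩
  simpa [hs n hn] using (hg n x).symm

lemma IsFrobSemilinear.comp_quotientMk {e : ℕ} {h : R ⧸ I →+ Submodule.torsionBySet R M I}
    (hh : IsFrobSemilinear p e (R ⧸ I) h) :
    IsFrobSemilinear p e R
      ((Submodule.torsionBySet R M I).subtype.toAddMonoidHom.comp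
        (h.comp (Ideal.Quotient.mk I).toAddMonoidHom)) := by
  intro r y
  change (h (Ideal.Quotient.mk I (r ^ p ^ e * y)) : M) = r • (h (Ideal.Quotient.mk I y) : M)
  rw [map_mul, map_pow, ← smul_eq_mul, hh, Submodule.torsionBySet.mk_smul, SetLike.val_smul]

variable [ExpChar R p]

lemma pow_expChar_pow_eq_zero_of_le {n : R} {k e : ℕ} (hn : n ^ p ^ k = 0) (hke : k ≤ e) :
    n ^ p ^ e = 0 :=
  pow_eq_zero_of_le (Nat.pow_le_pow_right (expChar_pos R p) hke) hn

lemma tiAux_le_torsionBySet {s : Set R} {k : ℕ} (hs : ∀ n ∈ s, n ^ p ^ k = 0) (c : R)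
    {e₀ : ℕ} (hk : k ≤ e₀) : tiAux p R M c e₀ ≤ Submodule.torsionBySet R M s := by
  refine Submodule.span_le.mpr ?_
  rintro _ ⟨e, he, g, hg, rfl⟩
  exact hg.map_mem_torsionBySet
    (fun n hn ↦ pow_expChar_pow_eq_zero_of_le (hs n hn) (hk.trans he)) c

def Ideal.Quotient.iterateFrobeniusLift (k : ℕ) (hk : ∀ n ∈ I, n ^ p ^ k = 0) : R ⧸ I →+* R :=
  Ideal.Quotient.lift I (iterateFrobenius R p k)
    (fun n hn ↦ (iterateFrobenius_def p k n).trans (hk n hn))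

@[simp]
lemma Ideal.Quotient.iterateFrobeniusLift_mk {k : ℕ} (hk : ∀ n ∈ I, n ^ p ^ k = 0) (c : R) :
    iterateFrobeniusLift k hk (Ideal.Quotient.mk I c) = c ^ p ^ k :=
  iterateFrobenius_def p k c

lemma IsFrobSemilinear.exists_quotient {k e : ℕ} (hk : ∀ n ∈ I, n ^ p ^ k = 0) {g : R →+ M}
    (hg : IsFrobSemilinear p (e + k) R g) :
    ∃ h : R ⧸ I →+ Submodule.torsionBySet R M I, IsFrobSemilinear p e (R ⧸ I) h ∧
      ∀ c : R, (h (Ideal.Quotient.mk I c) : M) = g (c ^ p ^ k) := by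
  let φ := Ideal.Quotient.iterateFrobeniusLift k hk
  have hφ : ∀ n ∈ I, n ^ p ^ (e + k) = 0 :=
    fun n hn ↦ pow_expChar_pow_eq_zero_of_le (hk n hn) (Nat.le_add_left k e)
  refine ⟨(g.comp φ.toAddMonoidHom).codRestrict _ fun y ↦ hg.map_mem_torsionBySet hφ (φ y),
    ?_, fun c ↦ by simp [φ]⟩
  intro s y
  obtain ⟨t, rfl⟩ := Ideal.Quotient.mk_surjective s
  apply Subtype.ext
  have hφ_smul : φ ((Ideal.Quotient.mk I t) ^ p ^ e • y) = t ^ p ^ (e + k) • φ y := by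
    simp [φ, smul_eq_mul, ← pow_mul, ← pow_add, add_comm]
  simp only [AddMonoidHom.codRestrict_apply, AddMonoidHom.comp_apply,
    RingHom.toAddMonoidHom_eq_coe, AddMonoidHom.coe_coe, hφ_smul, hg t,
    Submodule.torsionBySet.mk_smul, SetLike.val_smul]

end Frobenius

section TightInterior

variable {p : ℕ} {R : Type*} [CommRing R] {M : Type*} [AddCommGroup M] [Module R M]
  {I : Ideal R}

lemma mem_tightInterior {x : M} :
    x ∈ tightInterior p R M ↔ ∀ c ∈ RCirc R, ∀ e₀ : ℕ, x ∈ tiAux p R M c e₀ := by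
  simp only [tightInterior, Submodule.mem_iInf]

lemma map_tiAux_quotient_le (c : R) (e₀ : ℕ) :
    ((tiAux p (R ⧸ I) (Submodule.torsionBySet R M I) (Ideal.Quotient.mk I c) e₀).restrictScalars
      R).map (Submodule.torsionBySet R M I).subtype ≤ tiAux p R M c e₀ := by
  rw [tiAux, Submodule.restrictScalars_span _ _ Ideal.Quotient.mk_surjective, Submodule.map_span_le]
  rintro _ ⟨e, he, h, hh, rfl⟩
  exact Submodule.subset_span ⟨e, he, _, hh.comp_quotientMk, rfl⟩

variable [ExpChar R p]

lemma tiAux_le_map_tiAux_quotient {k : ℕ} (hk : ∀ n ∈ I, n ^ p ^ k = 0) (c : R) (e₀ : ℕ) :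
    tiAux p R M (c ^ p ^ k) (e₀ + k) ≤
      ((tiAux p (R ⧸ I) (Submodule.torsionBySet R M I) (Ideal.Quotient.mk I c)
        e₀).restrictScalars R).map (Submodule.torsionBySet R M I).subtype := by
  refine Submodule.span_le.mpr ?_
  rintro _ ⟨e, he, g, hg, rfl⟩
  obtain ⟨e', rfl⟩ : ∃ e', e = e' + k := ⟨e - k, by omega⟩
  obtain ⟨h, hh, hhg⟩ := hg.exists_quotient hk
  exact ⟨h (Ideal.Quotient.mk I c), Submodule.subset_span ⟨e', by omega, h, hh, rfl⟩, hhg c⟩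

theorem tightInterior_eq_map_tightInterior_quotient {k : ℕ} (hk : ∀ n ∈ I, n ^ p ^ k = 0) :
    tightInterior p R M =
      ((tightInterior p (R ⧸ I) (Submodule.torsionBySet R M I)).restrictScalars R).map
        (Submodule.torsionBySet R M I).subtype := by
  have hI : I ≤ nilradical R := fun n hn ↦ mem_nilradical.mpr ⟨_, hk n hn⟩
  apply le_antisymm
  · intro x hx
    have hxI : x ∈ Submodule.torsionBySet R M I :=
      tiAux_le_torsionBySet hk 1 le_rfl (mem_tightInterior.mp hx 1 one_mem_RCirc k)
    refine ⟨⟨x, hxI⟩, mem_tightInterior.mpr fun c' hc' e₀ ↦ ?_, rfl⟩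
    obtain ⟨c, rfl⟩ := Ideal.Quotient.mk_surjective c'
    have hc : c ^ p ^ k ∈ RCirc R := pow_mem_RCirc ((mk_mem_RCirc_quotient_iff hI).mp hc') _
    obtain ⟨z, hz, hzx⟩ := tiAux_le_map_tiAux_quotient hk c e₀
      (mem_tightInterior.mp hx _ hc (e₀ + k))
    rwa [show z = ⟨x, hxI⟩ from Subtype.ext hzx] at hz
  · rintro _ ⟨z, hz, rfl⟩
    refine mem_tightInterior.mpr fun c hc e₀ ↦ map_tiAux_quotient_le c e₀ ⟨z, ?_, rfl⟩
    exact mem_tightInterior.mp hz _ ((mk_mem_RCirc_quotient_iff hI).mpr hc) e₀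

end TightInterior

lemma Ideal.exists_forall_pow_pow_eq_zero_of_isNilpotent {R : Type*} [CommRing R] {p : ℕ}
    (hp : 1 < p) {I : Ideal R} (hI : IsNilpotent I) : ∃ k : ℕ, ∀ n ∈ I, n ^ p ^ k = 0 := by
  obtain ⟨N, hN⟩ := hI
  refine ⟨N, fun n hn ↦ pow_eq_zero_of_le (Nat.lt_pow_self hp).le ?_⟩
  simpa [hN] using Ideal.pow_mem_pow hn N

theorem tightInterior_eq_tightInterior_red_general
    (p : ℕ) [Fact p.Prime] (R : Type u) [CommRing R] [IsNoetherianRing R] [CharP R p]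
    (M : Type v) [AddCommGroup M] [Module R M] :
    (tightInterior p R M : Set M) =
      Subtype.val '' (tightInterior p (R ⧸ nilradical R)
        (Submodule.torsionBySet R M ↑(nilradical R)) :
          Set (Submodule.torsionBySet R M ↑(nilradical R))) := by
  obtain ⟨k, hk⟩ := (nilradical R).exists_forall_pow_pow_eq_zero_of_isNilpotent
    (Fact.out : p.Prime).one_lt (IsNoetherianRing.isNilpotent_nilradical R)
  rw [tightInterior_eq_map_tightInterior_quotient hk, Submodule.map_coe,
    Submodule.coe_restrictScalars]
  rfl

/-- Proposition 2.3: reduction to the reduced case. -/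
theorem tightInterior_eq_tightInterior_red
    (p : ℕ) [Fact p.Prime] (R : Type u) [CommRing R] [IsNoetherianRing R] [CharP R p]
    (hred : FFinite p (R ⧸ nilradical R))
    (M : Type v) [AddCommGroup M] [Module R M] :
    (tightInterior p R M : Set M) =
      Subtype.val '' (tightInterior p (R ⧸ nilradical R)
        (Submodule.torsionBySet R M ↑(nilradical R)) :
          Set (Submodule.torsionBySet R M ↑(nilradical R))) :=
  tightInterior_eq_tightInterior_red_general p R M
end

section
/- Let R be a commutative Noetherian ring of prime characteristic p such that R_red is F-finite, and let M be an R-module. Then for every e ≥ 0 one has ^e(M_*) ⊆ (^eM)_{*R}: under the identity map of underlying sets, the tight interior of M is contained in the tight interior of the R-module ^eM. -/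
open scoped TensorProduct Pointwise

universe u v w

/-- `Hom_R(S, M)` is an `S`-module via the action of `S` on the source:
`(s • f) x = f (s * x)`. -/
instance homSourceModule (R : Type u) [CommRing R] (S : Type v) [CommRing S] [Algebra R S]
    (M : Type w) [AddCommGroup M] [Module R M] : Module S (S →ₗ[R] M) where
  smul s f := f ∘ₗ LinearMap.mulLeft R s
  one_smul f := LinearMap.ext fun x => show f (1 * x) = f x by rw [one_mul]
  mul_smul s t f := LinearMap.ext fun x =>
    show f (s * t * x) = f (t * (s * x)) by rw [show s * t * x = t * (s * x) by ring]
  smul_zero s := rfl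
  smul_add s f g := rfl
  add_smul s t f := LinearMap.ext fun x =>
    show f ((s + t) * x) = f (s * x) + f (t * x) by rw [add_mul, map_add]
  zero_smul f := LinearMap.ext fun x => show f (0 * x) = 0 by rw [zero_mul, map_zero]

@[simp] lemma homSourceModule_smul_apply {R : Type u} [CommRing R] {S : Type v} [CommRing S]
    [Algebra R S] {M : Type w} [AddCommGroup M] [Module R M] (s : S) (f : S →ₗ[R] M) (x : S) :
    (s • f) x = f (s * x) := rfl

/-- Post-composition `Hom_R(S, V) → Hom_R(S, W)` with an `R`-linear map `β : V → W`,
as an `S`-linear map for the source `S`-actions. -/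
def homComp (R : Type u) [CommRing R] (S : Type v) [CommRing S] [Algebra R S]
    {V : Type*} {W : Type*} [AddCommGroup V] [Module R V] [AddCommGroup W] [Module R W]
    (β : V →ₗ[R] W) : (S →ₗ[R] V) →ₗ[S] (S →ₗ[R] W) where
  toFun f := β ∘ₗ f
  map_add' f g := LinearMap.ext fun x => by simp
  map_smul' s f := rfl

/-- `{}^e M`: the module `M` with `R`-action twisted by the `e`-th iterate of Frobenius. -/
def FrobM (_p _e : ℕ) (R : Type u) (M : Type v) : Type v := M

instance (p e : ℕ) (R : Type u) (M : Type v) [AddCommGroup M] :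
    AddCommGroup (FrobM p e R M) :=
  inferInstanceAs (AddCommGroup M)

noncomputable instance (p e : ℕ) (R : Type u) (M : Type v) [CommRing R] [ExpChar R p]
    [AddCommGroup M] [Module R M] : Module R (FrobM p e R M) :=
  Module.compHom M (iterateFrobenius R p e)

/-- For `R → S` and an `S`-module `M`, an additive map `g : M →+ L` to an `R`-module `L` is
`R`-linear as a map `{}^e M → L` (with `{}^e M` formed over `S` and restricted to `R`) iff
`g (((algebraMap R S) r) ^ (p ^ e) • x) = r • g x`. -/
def IsFrobSemilinearAlg (p e : ℕ) (R : Type u) (S : Type v) [CommRing R] [CommRing S]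
    [Algebra R S] (M : Type w) (L : Type*) [AddCommGroup M] [Module S M]
    [AddCommGroup L] [Module R L] (g : M →+ L) : Prop :=
  ∀ (r : R) (x : M), g ((algebraMap R S r ^ p ^ e) • x) = r • g x

/-- The natural map `S ⊗_R {}^e R → {}^e S`, `s ⊗ {}^e r ↦ {}^e (s^{p^e} · rS)`, on underlying
additive groups. -/
noncomputable def frobBC (p e : ℕ) (R : Type u) (S : Type v) [CommRing R] [CommRing S]
    [Algebra R S] [Fact p.Prime] [CharP R p] [CharP S p] :
    TensorProduct R S (FrobAlg p e R) →+ S :=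
  TensorProduct.liftAddHom
    { toFun := fun s =>
        { toFun := fun r => s ^ p ^ e * algebraMap R S r
          map_zero' := by
            exact (congrArg (s ^ p ^ e * ·) (map_zero (algebraMap R S))).trans (mul_zero _)
          map_add' := fun a b => by
            show s ^ p ^ e * algebraMap R S (a + b) = _
            exact (congrArg (s ^ p ^ e * ·) (map_add (algebraMap R S) (show R from a)
              (show R from b))).trans (mul_add _ _ _) }
      map_zero' := by
        ext r
        show (0 : S) ^ p ^ e * algebraMap R S r = 0
        rw [zero_pow (pow_ne_zero e (Fact.out : p.Prime).ne_zero), zero_mul]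
      map_add' := fun s t => by
        ext r
        show (s + t) ^ p ^ e * algebraMap R S r = _
        rw [add_pow_char_pow, add_mul]
        rfl }
    (fun r s x => by
      show (r • s) ^ p ^ e * algebraMap R S (show R from x)
          = s ^ p ^ e * algebraMap R S (r ^ p ^ e * (show R from x))
      rw [Algebra.smul_def, mul_pow, map_mul, map_pow]
      ring)

/-!
A generator `g c` of `M_*[c, p^{e₀}]`, with `g : {}^{e'}R → M` linear, is also a generator of
`({}^e M)_*[c, p^{e₀}]`, since `g` is linear as a map `{}^{e+e'}R → {}^e M`. Moreover, the
generators are stable under the `R`-action on `M` (precompose `g` with multiplication by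
`r^{p^{e'}}`), so `M_*[c, p^{e₀}]` is their additive closure, which lands in
`({}^e M)_*[c, p^{e₀}]` regardless of the change of `R`-action.
-/

section FrobeniusTwist

variable {p : ℕ} {R : Type u} [CommRing R]

theorem mem_tightInterior_iff {M : Type v} [AddCommGroup M] [Module R M] {x : M} :
    x ∈ tightInterior p R M ↔ ∀ c ∈ RCirc R, ∀ e₀ : ℕ, x ∈ tiAux p R M c e₀ := by
  simp only [tightInterior, Submodule.mem_iInf]

theorem IsFrobSemilinear.comp_mulLeft {e : ℕ} {M : Type v} [AddCommGroup M] [Module R M]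
    {g : R →+ M} (hg : IsFrobSemilinear p e R g) (a : R) :
    IsFrobSemilinear p e R (g.comp (AddMonoidHom.mulLeft a)) := fun r x => by
  simpa [smul_eq_mul, mul_left_comm] using hg r (a * x)

theorem IsFrobSemilinear.toFrobM [ExpChar R p] {e e' : ℕ} {N : Type v} {M : Type w}
    [AddCommGroup N] [Module R N] [AddCommGroup M] [Module R M] {g : N →+ M}
    (hg : IsFrobSemilinear p e' R g) :
    IsFrobSemilinear p (e + e') R (show N →+ FrobM p e R M from g) := fun r x => by
  show g (r ^ p ^ (e + e') • x) = iterateFrobenius R p e r • g x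
  rw [iterateFrobenius_def, ← hg, pow_add, pow_mul]

theorem mem_tiAux_frobM [ExpChar R p] {M : Type v} [AddCommGroup M] [Module R M] (e : ℕ)
    {c : R} {e₀ : ℕ} {x : M} (hx : x ∈ tiAux p R M c e₀) :
    (show FrobM p e R M from x) ∈ tiAux p R (FrobM p e R M) c e₀ := by
  induction hx using Submodule.closure_induction with
  | zero => exact zero_mem _
  | add y z _ _ hy hz => exact add_mem hy hz
  | smul_mem r y hy =>
    obtain ⟨e', he', g, hg, rfl⟩ := hy
    have hrg : r • g c = g.comp (AddMonoidHom.mulLeft (r ^ p ^ e')) c := by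
      simpa [smul_eq_mul] using (hg r c).symm
    rw [hrg]
    exact Submodule.subset_span
      ⟨e + e', he'.trans (Nat.le_add_left _ _), _, (hg.comp_mulLeft _).toFrobM, rfl⟩

end FrobeniusTwist

theorem frob_tightInterior_le_general
    (p : ℕ) [Fact p.Prime] (R : Type u) [CommRing R] [CharP R p]
    (M : Type v) [AddCommGroup M] [Module R M] (e : ℕ) :
    ∀ x ∈ tightInterior p R M,
      (show FrobM p e R M from x) ∈ tightInterior p R (FrobM p e R M) := by
  intro x hx
  rw [mem_tightInterior_iff] at hx
  exact mem_tightInterior_iff.mpr fun c hc e₀ => mem_tiAux_frobM e (hx c hc e₀)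

/-- Lemma 6.4: `{}^e (M_*) ⊆ ({}^e M)_{*R}`. -/
theorem frob_tightInterior_le
    (p : ℕ) [Fact p.Prime] (R : Type u) [CommRing R] [IsNoetherianRing R] [CharP R p]
    (hred : FFinite p (R ⧸ nilradical R))
    (M : Type v) [AddCommGroup M] [Module R M] (e : ℕ) :
    ∀ x ∈ tightInterior p R M,
      (show FrobM p e R M from x) ∈ tightInterior p R (FrobM p e R M) :=
  frob_tightInterior_le_general p R M e
end

section
/- Let R be a reduced commutative Noetherian ring (of arbitrary characteristic) with minimal primes 𝔭_1, …, 𝔭_n, normalization R^N, and conductor 𝔠 = Ann_R(R^N/R). Then 𝔠 ⊆ Σ_{i=1}^n Ann_R(𝔭_i), where Ann_R(𝔭_i) = ⋂_{j ≠ i} 𝔭_j. -/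
/-!
Let `𝔭` be a minimal prime and `q` the intersection of the other minimal primes. No minimal prime
contains `𝔭 + q`, so prime avoidance gives `t = p + s` (`p ∈ 𝔭`, `s ∈ q`) outside every minimal
prime, hence a nonzerodivisor since `R` is reduced. As `s 𝔭 ⊆ ⋂ 𝔮 = 0`, we get `s t = s²`, so
`e = s / t` is an idempotent of the total ring of fractions, hence integral over `R`. For `r` in
the conductor, `a = r e` lies in `R`; it kills `𝔭`, agrees with `r` modulo `𝔭` and lies in every
other minimal prime. Summing over `𝔭`, `r - ∑ a_𝔭` lies in every minimal prime, so it is `0`.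
-/

universe u

theorem IsIdempotentElem.isIntegral {R A : Type*} [CommRing R] [Ring A] [Algebra R A] {e : A}
    (he : IsIdempotentElem e) : IsIntegral R e := by
  refine ⟨Polynomial.X ^ 2 - Polynomial.X,
    Polynomial.monic_X_pow_sub (Polynomial.degree_X_le.trans_lt (by norm_num)), ?_⟩
  simp [sq, he.eq]

theorem IsLocalization.isIdempotentElem_mk' {R S : Type*} [CommRing R] [CommRing S] [Algebra R S]
    {M : Submonoid R} [IsLocalization M S] {s : R} {t : M} (h : s * t = s * s) :
    IsIdempotentElem (IsLocalization.mk' S s t) := by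
  rw [IsIdempotentElem, ← IsLocalization.mk'_mul, ← h, IsLocalization.mk'_cancel]

section MinimalPrimes

variable {R : Type u} [CommRing R]

theorem exists_sub_mem_and_mem_of_mem_minimalPrimes (hfin : (minimalPrimes R).Finite)
    {𝔭 : Ideal R} (h𝔭 : 𝔭 ∈ minimalPrimes R) :
    ∃ s t : R, (∀ 𝔮 ∈ minimalPrimes R, t ∉ 𝔮) ∧ t - s ∈ 𝔭 ∧
      ∀ 𝔮 ∈ minimalPrimes R, 𝔮 ≠ 𝔭 → s ∈ 𝔮 := by
  classical
  set q : Ideal R := (hfin.toFinset.erase 𝔭).inf id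
  have hq_le : ∀ 𝔮 ∈ minimalPrimes R, 𝔮 ≠ 𝔭 → q ≤ 𝔮 := fun 𝔮 h𝔮 hne ↦
    Finset.inf_le (Finset.mem_erase.2 ⟨hne, hfin.mem_toFinset.2 h𝔮⟩)
  have hq_not_le : ¬ q ≤ 𝔭 := by
    rw [h𝔭.isPrime.inf_le']
    rintro ⟨𝔮, h𝔮, hle⟩
    obtain ⟨hne, h𝔮⟩ := Finset.mem_erase.1 h𝔮
    exact hne (le_antisymm hle (h𝔭.2 (hfin.mem_toFinset.1 h𝔮).1 hle))
  have havoid : ¬ ((𝔭 ⊔ q : Ideal R) : Set R) ⊆ ⋃ 𝔮 ∈ minimalPrimes R, (𝔮 : Set R) := by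
    rw [Ideal.subset_union_prime_finite hfin 𝔭 𝔭 fun 𝔮 h𝔮 _ _ ↦ h𝔮.isPrime]
    rintro ⟨𝔮, h𝔮, hle⟩
    by_cases hne : 𝔮 = 𝔭
    · exact hq_not_le (hne ▸ le_sup_right.trans hle)
    · have h𝔭𝔮 : 𝔭 ≤ 𝔮 := le_sup_left.trans hle
      exact hne (le_antisymm (h𝔮.2 h𝔭.1 h𝔭𝔮) h𝔭𝔮)
  obtain ⟨t, ht, ht_notMem⟩ := Set.not_subset.1 havoid
  obtain ⟨p, hp, s, hs, rfl⟩ := Submodule.mem_sup.1 ht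
  exact ⟨s, p + s, fun 𝔮 h𝔮 hmem ↦ ht_notMem (Set.mem_biUnion h𝔮 hmem),
    by rwa [add_sub_cancel_right], fun 𝔮 h𝔮 hne ↦ hq_le 𝔮 h𝔮 hne hs⟩

variable [IsReduced R]

theorem eq_zero_of_forall_mem_minimalPrimes {x : R} (hx : ∀ 𝔮 ∈ minimalPrimes R, x ∈ 𝔮) :
    x = 0 := by
  have hx : x ∈ (⊥ : Ideal R).radical := by
    rw [← Ideal.sInf_minimalPrimes]
    exact Ideal.mem_sInf.2 hx
  exact IsReduced.eq_zero x hx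

theorem mem_nonZeroDivisors_of_forall_notMem_minimalPrimes {t : R}
    (ht : ∀ 𝔮 ∈ minimalPrimes R, t ∉ 𝔮) : t ∈ nonZeroDivisors R :=
  mem_nonZeroDivisors_iff_right.2 fun _ hy ↦ eq_zero_of_forall_mem_minimalPrimes fun 𝔮 h𝔮 ↦
    (h𝔮.isPrime.mem_or_mem (hy ▸ 𝔮.zero_mem)).resolve_right (ht 𝔮 h𝔮)

theorem eq_sum_of_sub_mem_minimalPrimes (hfin : (minimalPrimes R).Finite) {r : R}
    {a : Ideal R → R} (hsub : ∀ 𝔭 ∈ minimalPrimes R, r - a 𝔭 ∈ 𝔭)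
    (hmem : ∀ 𝔭 ∈ minimalPrimes R, ∀ 𝔮 ∈ minimalPrimes R, 𝔮 ≠ 𝔭 → a 𝔭 ∈ 𝔮) :
    r = ∑ 𝔭 ∈ hfin.toFinset, a 𝔭 := by
  classical
  refine sub_eq_zero.1 (eq_zero_of_forall_mem_minimalPrimes fun 𝔮 h𝔮 ↦ ?_)
  rw [← Finset.add_sum_erase _ _ (hfin.mem_toFinset.2 h𝔮), ← sub_sub]
  refine 𝔮.sub_mem (hsub 𝔮 h𝔮) (𝔮.sum_mem fun 𝔭 h𝔭 ↦ ?_)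
  obtain ⟨hne, h𝔭⟩ := Finset.mem_erase.1 h𝔭
  exact hmem 𝔭 (hfin.mem_toFinset.1 h𝔭) 𝔮 h𝔮 (Ne.symm hne)

theorem exists_mem_torsionBySet_of_mem_conductor (K : Type*) [CommRing K] [Algebra R K]
    [IsFractionRing R K] (hfin : (minimalPrimes R).Finite) {𝔭 : Ideal R}
    (h𝔭 : 𝔭 ∈ minimalPrimes R) {r : R}
    (hr : ∀ y ∈ integralClosure R K, algebraMap R K r * y ∈ Set.range (algebraMap R K)) :
    ∃ a : R, a ∈ Submodule.torsionBySet R R 𝔭 ∧ r - a ∈ 𝔭 ∧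
      ∀ 𝔮 ∈ minimalPrimes R, 𝔮 ≠ 𝔭 → a ∈ 𝔮 := by
  obtain ⟨s, t, ht, hts, hs⟩ := exists_sub_mem_and_mem_of_mem_minimalPrimes hfin h𝔭
  have hs𝔭 : ∀ p ∈ 𝔭, s * p = 0 := fun p hp ↦ eq_zero_of_forall_mem_minimalPrimes fun 𝔮 h𝔮 ↦ by
    by_cases hne : 𝔮 = 𝔭
    · exact 𝔮.mul_mem_left s (hne ▸ hp)
    · exact 𝔮.mul_mem_right p (hs 𝔮 h𝔮 hne)
  have ht₀ : t ∈ nonZeroDivisors R := mem_nonZeroDivisors_of_forall_notMem_minimalPrimes ht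
  have hst : s * t = s * s := by linear_combination hs𝔭 _ hts
  set e := IsLocalization.mk' K s (⟨t, ht₀⟩ : nonZeroDivisors R)
  obtain ⟨a, ha⟩ := hr e (IsLocalization.isIdempotentElem_mk' hst).isIntegral
  have hat : a * t = r * s := IsFractionRing.injective R K <| by
    rw [map_mul, map_mul, ha, mul_assoc, IsLocalization.mk'_spec]
  have mem_of_mul_t {x : R} {𝔮 : Ideal R} (h𝔮 : 𝔮 ∈ minimalPrimes R) (hx : x * t ∈ 𝔮) : x ∈ 𝔮 :=
    (h𝔮.isPrime.mem_or_mem hx).resolve_right (ht 𝔮 h𝔮)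
  refine ⟨a, ?_, mem_of_mul_t h𝔭 ?_, fun 𝔮 h𝔮 hne ↦ mem_of_mul_t h𝔮 ?_⟩
  · refine (Submodule.mem_torsionBySet_iff _ _).2 fun ⟨p, hp⟩ ↦ ?_
    refine (mul_right_mem_nonZeroDivisors_eq_zero_iff ht₀).1 ?_
    linear_combination p * hat + r * hs𝔭 p hp
  · rw [show (r - a) * t = r * (t - s) by linear_combination -hat]
    exact 𝔭.mul_mem_left r hts
  · exact hat ▸ 𝔮.mul_mem_left r (hs 𝔮 h𝔮 hne)

end MinimalPrimes

/-- Proposition 7.4: for a reduced Noetherian ring, the conductor into the normalization is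
contained in the sum of the annihilators of the minimal primes. -/
theorem conductor_subset_sum_ann
    (R : Type u) [CommRing R] [IsNoetherianRing R] [IsReduced R] :
    {r : R | ∀ y ∈ integralClosure R (FractionRing R),
        algebraMap R (FractionRing R) r * y ∈ Set.range (algebraMap R (FractionRing R))}
      ⊆ ↑(⨆ 𝔭 ∈ minimalPrimes R, Submodule.torsionBySet R R ↑𝔭) := by
  intro r hr
  have hfin := minimalPrimes.finite_of_isNoetherianRing R
  choose! a ha using fun 𝔭 (h𝔭 : 𝔭 ∈ minimalPrimes R) ↦
    exists_mem_torsionBySet_of_mem_conductor (FractionRing R) hfin h𝔭 hr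
  rw [SetLike.mem_coe, eq_sum_of_sub_mem_minimalPrimes hfin (fun 𝔭 h𝔭 ↦ (ha 𝔭 h𝔭).2.1)
    fun 𝔭 h𝔭 ↦ (ha 𝔭 h𝔭).2.2]
  refine Submodule.sum_mem _ fun 𝔭 h𝔭 ↦ ?_
  have h𝔭 := hfin.mem_toFinset.1 h𝔭
  exact Submodule.mem_iSup_of_mem 𝔭 (Submodule.mem_iSup_of_mem h𝔭 (ha 𝔭 h𝔭).1)
end
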